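/- Let p ≥ 2 be an even integer, let H = {h : [n] → [m]} be a 4p-wise independent hash family, and let D be a 4p-wise independent distribution over {−1,1}^n. Then for h uniform in H, x ∼ D, and any vector v ∈ ℝ^n: E[(‖v‖_2² − ‖v D(x) A(h)ᵀ‖_2²)^p] ≤ O(p)^{2p}·(‖v‖_2^4/m)^{p/2} + O(p)^{2p}·‖v‖_4^{2p}. -/

import Mathlib

open Finset

/-- The map sending a boolean to the corresponding sign `±1`. -/
noncomputable def pm (b : Bool) : ℝ := if b then 1 else -1

/-!
Write the left side as `E[Q ^ p]`, where `Q = ∑_{i ≠ i'} v_i v_i' x_i x_i' [h i = h i']`, and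
expand it over `p`-tuples of off-diagonal pairs, i.e. over maps from the `2p` slots to `[n]`.
The signs kill every tuple in which some index fills an odd number of slots. For the others, the
`#V` indices involved span a graph whose edges must all collide under `h`; as every component has
at least two vertices, this has probability at most `m ^ (#components - #V) ≤ m ^ (-#V/2)`.
Grouping the tuples by the partition of the slots into equal indices (at most `(2p) ^ (2p)`
partitions), a block of size two contributes `‖v‖₂² / √m`, a larger block of size `d` at most
`‖v‖₄ ^ d`, so each group is at most `(‖v‖₂² / √m) ^ p + ‖v‖₄ ^ (2p)`.
-/

lemma pm_mul_self (b : Bool) : pm b * pm b = 1 := by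
  cases b <;> norm_num [pm]

lemma pm_pow (b : Bool) (d : ℕ) : pm b ^ d = if Even d then 1 else pm b := by
  rcases Nat.even_or_odd d with ⟨k, rfl⟩ | ⟨k, rfl⟩
  · simp [← two_mul, pow_mul, sq, pm_mul_self]
  · simp [pow_succ, pow_mul, sq, pm_mul_self]

section Fibers

variable {ι α : Type*} [Fintype ι] [DecidableEq α]

def fiberCard (f : ι → α) (a : α) : ℕ := #{u | f u = a}

lemma prod_comp_eq_prod_image_pow {M : Type*} [CommMonoid M] (f : ι → α) (g : α → M) :
    ∏ u, g (f u) = ∏ a ∈ univ.image f, g a ^ fiberCard f a :=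
  Finset.prod_comp g f

lemma sum_fiberCard_image (f : ι → α) : ∑ a ∈ univ.image f, fiberCard f a = Fintype.card ι :=
  (card_eq_sum_card_image f univ).symm

lemma fiberCard_ne_zero_iff {f : ι → α} {a : α} : fiberCard f a ≠ 0 ↔ a ∈ univ.image f := by
  simp [fiberCard, filter_eq_empty_iff]

end Fibers

section KernelPatterns

variable {ι α : Type*} [Nonempty ι]

/-- Depends only on the partition of `ι` into the fibres of `f`. -/
noncomputable def kerPattern (f : ι → α) : ι → ι := Function.invFun f ∘ f

lemma apply_kerPattern (f : ι → α) (u : ι) : f (kerPattern f u) = f u :=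
  Function.invFun_eq ⟨u, rfl⟩

lemma kerPattern_eq_kerPattern_iff {f : ι → α} {u u' : ι} :
    kerPattern f u = kerPattern f u' ↔ f u = f u' :=
  ⟨fun h => by rw [← apply_kerPattern f u, h, apply_kerPattern f u'],
    fun h => congrArg (Function.invFun f) h⟩

variable [Fintype ι] [DecidableEq ι] [DecidableEq α]

lemma prod_image_eq_prod_image_kerPattern {M : Type*} [CommMonoid M] (f : ι → α)
    (H : α → ℕ → M) :
    ∏ a ∈ univ.image f, H a (fiberCard f a) =
      ∏ b ∈ univ.image (kerPattern f), H (f b) (fiberCard (kerPattern f) b) := by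
  have himage : univ.image f = (univ.image (kerPattern f)).image f := by
    rw [image_image]
    exact image_congr fun u _ => (apply_kerPattern f u).symm
  rw [himage, prod_image]
  · refine prod_congr rfl fun b hb => ?_
    obtain ⟨u, -, rfl⟩ := mem_image.1 hb
    congr 2
    unfold fiberCard
    congr 1
    ext u'
    simp [kerPattern_eq_kerPattern_iff, apply_kerPattern f u]
  · intro b₁ hb₁ b₂ hb₂ h
    obtain ⟨u₁, -, rfl⟩ := mem_image.1 (mem_coe.1 hb₁)
    obtain ⟨u₂, -, rfl⟩ := mem_image.1 (mem_coe.1 hb₂)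
    rw [apply_kerPattern f u₁, apply_kerPattern f u₂] at h
    rw [kerPattern_eq_kerPattern_iff.2 h]

variable [Fintype α] (G : α → ℕ → ℝ) (hG : ∀ a d, 0 ≤ G a d)
include hG

/-- Functions with a given kernel pattern are determined by their values on its image, and
those values are free: summing over them factorises. -/
lemma sum_kerPattern_class_le (S : Finset (ι → α)) (f₀ : ι → α) :
    ∑ f ∈ S with kerPattern f = kerPattern f₀, ∏ a ∈ univ.image f, G a (fiberCard f a) ≤
      ∏ a ∈ univ.image f₀, ∑ a', G a' (fiberCard f₀ a) := by
  set φ := kerPattern f₀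
  set R := univ.image φ
  let restrict : (ι → α) → (R → α) := fun f b => f b
  have hinj : Set.InjOn restrict ↑(S.filter fun f => kerPattern f = φ) := by
    intro f₁ hf₁ f₂ hf₂ h
    funext u
    have h₁ := (mem_filter.1 (mem_coe.1 hf₁)).2
    have h₂ := (mem_filter.1 (mem_coe.1 hf₂)).2
    have := congrFun h ⟨φ u, mem_image_of_mem _ (mem_univ u)⟩
    simp only [restrict] at this
    rwa [← h₁, apply_kerPattern f₁ u, h₁, ← h₂, apply_kerPattern f₂ u] at this
  calc ∑ f ∈ S with kerPattern f = φ, ∏ a ∈ univ.image f, G a (fiberCard f a)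
      = ∑ f ∈ S with kerPattern f = φ, ∏ b : R, G (restrict f b) (fiberCard φ b) := by
        refine sum_congr rfl fun f hf => ?_
        rw [prod_image_eq_prod_image_kerPattern, (mem_filter.1 hf).2]
        exact (prod_coe_sort R fun b => G (f b) (fiberCard φ b)).symm
    _ = ∑ ψ ∈ (S.filter fun f => kerPattern f = φ).image restrict,
          ∏ b : R, G (ψ b) (fiberCard φ b) :=
        (sum_image (f := fun ψ : R → α => ∏ b : R, G (ψ b) (fiberCard φ b)) hinj).symm
    _ ≤ ∑ ψ : R → α, ∏ b : R, G (ψ b) (fiberCard φ b) :=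
        sum_le_sum_of_subset_of_nonneg (subset_univ _) fun ψ _ _ =>
          prod_nonneg fun b _ => hG _ _
    _ = ∏ b ∈ R, ∑ a, G a (fiberCard φ b) := by
        rw [← Fintype.prod_sum fun (b : R) a => G a (fiberCard φ b)]
        exact prod_coe_sort R fun b => ∑ a, G a (fiberCard φ b)
    _ = ∏ a ∈ univ.image f₀, ∑ a', G a' (fiberCard f₀ a) :=
        (prod_image_eq_prod_image_kerPattern f₀ fun _ d => ∑ a', G a' d).symm

theorem sum_prod_image_le_of_forall_le (S : Finset (ι → α)) {M : ℝ} (hM₀ : 0 ≤ M)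
    (hM : ∀ f ∈ S, ∏ a ∈ univ.image f, ∑ a', G a' (fiberCard f a) ≤ M) :
    ∑ f ∈ S, ∏ a ∈ univ.image f, G a (fiberCard f a) ≤
      (Fintype.card ι : ℝ) ^ Fintype.card ι * M := by
  rw [← sum_fiberwise_of_maps_to fun f hf => mem_image_of_mem kerPattern hf]
  calc ∑ φ ∈ S.image kerPattern, ∑ f ∈ S with kerPattern f = φ,
        ∏ a ∈ univ.image f, G a (fiberCard f a)
      ≤ ∑ _φ ∈ S.image kerPattern, M := by
        refine sum_le_sum fun φ hφ => ?_
        obtain ⟨f₀, hf₀, rfl⟩ := mem_image.1 hφ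
        exact (sum_kerPattern_class_le G hG S f₀).trans (hM f₀ hf₀)
    _ = #(S.image kerPattern) * M := by rw [sum_const, nsmul_eq_mul]
    _ ≤ (Fintype.card ι : ℝ) ^ Fintype.card ι * M := by
        gcongr
        have := card_le_univ (S.image kerPattern)
        rw [Fintype.card_fun] at this
        exact_mod_cast this

end KernelPatterns

section PowerSums

variable {α : Type*} [Fintype α] (w : α → ℝ)

lemma sum_pow_le_sqrt_sum_pow_four_pow {d : ℕ} (hd : Even d) (h4 : 4 ≤ d) :
    ∑ a, w a ^ d ≤ √(∑ a, w a ^ 4) ^ (d / 2) := by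
  set B := √(∑ a, w a ^ 4)
  have hB : B ^ 2 = ∑ a, w a ^ 4 := Real.sq_sqrt (sum_nonneg fun a _ => by positivity)
  have hwB : ∀ a, w a ^ 2 ≤ B := fun a =>
    Real.le_sqrt_of_sq_le <| by
      rw [← pow_mul]
      exact single_le_sum (f := fun a => w a ^ 4) (fun a _ => by positivity) (mem_univ a)
  obtain ⟨k, rfl⟩ := hd
  have hk : (k + k) / 2 = 2 + (k - 2) := by omega
  calc ∑ a, w a ^ (k + k) = ∑ a, w a ^ 4 * (w a ^ 2) ^ (k - 2) := by
        refine sum_congr rfl fun a _ => ?_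
        rw [← pow_mul, ← pow_add]
        congr 1
        omega
    _ ≤ ∑ a, w a ^ 4 * B ^ (k - 2) := by
        gcongr with a
        exact hwB a
    _ = B ^ ((k + k) / 2) := by rw [← sum_mul, ← hB, hk, pow_add]

lemma sum_mul_pow_le_max_pow {r : ℝ} (hr₁ : r ≤ 1) {d : ℕ} (hd : Even d) (hd₀ : d ≠ 0) :
    ∑ a, r * w a ^ d ≤ max (r * ∑ a, w a ^ 2) √(∑ a, w a ^ 4) ^ (d / 2) := by
  obtain rfl | h4 : d = 2 ∨ 4 ≤ d := by obtain ⟨k, rfl⟩ := hd; omega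
  · rw [← mul_sum, pow_one]
    exact le_max_left _ _
  calc ∑ a, r * w a ^ d ≤ ∑ a, w a ^ d :=
        sum_le_sum fun a _ => mul_le_of_le_one_left (hd.pow_nonneg _) hr₁
    _ ≤ √(∑ a, w a ^ 4) ^ (d / 2) := sum_pow_le_sqrt_sum_pow_four_pow w hd h4
    _ ≤ _ := by gcongr; exact le_max_right _ _

/-- Blocks of size two contribute `r ‖w‖₂²` each, larger (even) blocks at most
`‖w‖₄^(size)`; the product is therefore at most the larger of the two `p`-th powers. -/
theorem prod_sum_mul_pow_le {r : ℝ} (hr₀ : 0 ≤ r) (hr₁ : r ≤ 1) {β : Type*} {s : Finset β}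
    {D : β → ℕ} (hD : ∀ b ∈ s, Even (D b) ∧ D b ≠ 0) {p : ℕ} (hsum : ∑ b ∈ s, D b = 2 * p) :
    ∏ b ∈ s, ∑ a, r * w a ^ D b ≤ (r * ∑ a, w a ^ 2) ^ p + √(∑ a, w a ^ 4) ^ p := by
  set A := r * ∑ a, w a ^ 2
  set B := √(∑ a, w a ^ 4)
  have hA : 0 ≤ A := mul_nonneg hr₀ (sum_nonneg fun a _ => sq_nonneg _)
  have hhalf : ∑ b ∈ s, D b / 2 = p := by
    have : ∑ b ∈ s, D b = 2 * ∑ b ∈ s, D b / 2 := by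
      rw [mul_sum]
      exact sum_congr rfl fun b hb => (Nat.two_mul_div_two_of_even (hD b hb).1).symm
    omega
  calc ∏ b ∈ s, ∑ a, r * w a ^ D b ≤ ∏ b ∈ s, max A B ^ (D b / 2) :=
        prod_le_prod (fun b hb => sum_nonneg fun a _ =>
            mul_nonneg hr₀ ((hD b hb).1.pow_nonneg _))
          fun b hb => sum_mul_pow_le_max_pow w hr₁ (hD b hb).1 (hD b hb).2
    _ = max A B ^ p := by rw [prod_pow_eq_pow_sum, hhalf]
    _ ≤ A ^ p + B ^ p := by
        rcases max_cases A B with ⟨h, -⟩ | ⟨h, -⟩ <;> rw [h]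
        · exact le_add_of_nonneg_right (by positivity)
        · exact le_add_of_nonneg_left (by positivity)

end PowerSums

section Hashing

variable {α β κ : Type*}

lemma sum_mul_indicator_le_card_mul [Fintype α] [DecidableEq α] [Fintype β] [DecidableEq β]
    (ν : (α → β) → ℝ) (hν₀ : ∀ h, 0 ≤ ν h) (V : Finset α) {q : ℝ}
    (hν : ∀ j : α → β, ∑ h, ν h * (if ∀ i ∈ V, h i = j i then 1 else 0) = q)
    (P : (α → β) → Prop) [DecidablePred P] (J : Finset (α → β))
    (hP : ∀ h, P h → ∃ j ∈ J, ∀ i ∈ V, h i = j i) :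
    ∑ h, ν h * (if P h then 1 else 0) ≤ #J * q := by
  have hterm : ∀ h j : α → β, 0 ≤ ν h * (if ∀ i ∈ V, h i = j i then (1 : ℝ) else 0) :=
    fun h j => mul_nonneg (hν₀ h) (by split_ifs <;> norm_num)
  calc ∑ h, ν h * (if P h then 1 else 0)
      ≤ ∑ h, ∑ j ∈ J, ν h * (if ∀ i ∈ V, h i = j i then 1 else 0) := by
        refine sum_le_sum fun h _ => ?_
        split_ifs with hPh
        · obtain ⟨j, hj, hagree⟩ := hP h hPh
          calc ν h * 1 = ν h * (if ∀ i ∈ V, h i = j i then 1 else 0) := by rw [if_pos hagree]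
            _ ≤ _ := single_le_sum (fun j _ => hterm h j) hj
        · rw [mul_zero]
          exact sum_nonneg fun j _ => hterm h j
    _ = #J * q := by rw [sum_comm, sum_congr rfl fun j _ => hν j, sum_const, nsmul_eq_mul]

def endpoint (t : κ → α × α) (u : κ × Bool) : α := if u.2 then (t u.1).2 else (t u.1).1

lemma endpoint_injective : Function.Injective (endpoint : (κ → α × α) → κ × Bool → α) := by
  intro t₁ t₂ h
  funext s
  exact Prod.ext (by simpa [endpoint] using congrFun h (s, false))
    (by simpa [endpoint] using congrFun h (s, true))

lemma prod_endpoint [Fintype κ] {M : Type*} [CommMonoid M] (t : κ → α × α) (g : α → M) :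
    ∏ u, g (endpoint t u) = ∏ s, g (t s).1 * g (t s).2 := by
  rw [Fintype.prod_prod_type]
  exact prod_congr rfl fun s _ => by simp [endpoint, mul_comm]

def EdgeRel (t : κ → α × α) (a b : α) : Prop := ∃ s, t s = (a, b)

lemma two_mul_card_image_le_card [DecidableEq β] {s : Finset α} {g : α → β}
    (h : ∀ i ∈ s, ∃ i' ∈ s, i' ≠ i ∧ g i' = g i) : 2 * #(s.image g) ≤ #s := by
  rw [card_eq_sum_card_image g s, mul_comm, ← smul_eq_mul, ← sum_const]
  refine sum_le_sum fun b hb => ?_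
  obtain ⟨i, hi, rfl⟩ := mem_image.1 hb
  obtain ⟨i', hi', hne, hg⟩ := h i hi
  exact one_lt_card.2 ⟨i', by simp [hi', hg], i, by simp [hi], hne⟩

open Classical in
/-- Every endpoint of a pair of distinct points has a distinct partner in its component. -/
lemma two_mul_card_components_le [DecidableEq α] [Fintype κ] {t : κ → α × α}
    (ht : ∀ s, (t s).1 ≠ (t s).2) :
    2 * #((univ.image (endpoint t)).image (Quot.mk (EdgeRel t))) ≤
      #(univ.image (endpoint t)) := by
  refine two_mul_card_image_le_card fun i hi => ?_
  obtain ⟨⟨s, b⟩, -, rfl⟩ := mem_image.1 hi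
  refine ⟨endpoint t (s, !b), mem_image_of_mem _ (mem_univ _), ?_, ?_⟩
  · cases b
    · simpa [endpoint] using (ht s).symm
    · simpa [endpoint] using ht s
  · have : Quot.mk (EdgeRel t) (t s).1 = Quot.mk _ (t s).2 := Quot.sound ⟨s, rfl⟩
    cases b <;> simp [endpoint, this]

lemma inv_sqrt_natCast_le_one {m : ℕ} (hm : 0 < m) : (√m)⁻¹ ≤ 1 :=
  inv_le_one_of_one_le₀ (Real.one_le_sqrt.2 (Nat.one_le_cast.2 hm))

lemma natCast_pow_mul_inv_pow_le {m : ℕ} (hm : 0 < m) {c k : ℕ} (h : 2 * c ≤ k) :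
    (m : ℝ) ^ c * (1 / m) ^ k ≤ (√m)⁻¹ ^ k := by
  have hm' : (0 : ℝ) < m := Nat.cast_pos.2 hm
  have hr : (√m)⁻¹ ^ 2 = 1 / (m : ℝ) := by rw [inv_pow, Real.sq_sqrt hm'.le, one_div]
  calc (m : ℝ) ^ c * (1 / m) ^ k = ((√m)⁻¹ ^ 2) ^ (k - c) := by
        rw [hr, ← Nat.add_sub_cancel' (show c ≤ k by omega), pow_add, ← mul_assoc, ← mul_pow,
          mul_one_div_cancel hm'.ne', one_pow, one_mul, Nat.add_sub_cancel_left]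
    _ ≤ (√m)⁻¹ ^ k := by
        rw [← pow_mul]
        exact pow_le_pow_of_le_one (by positivity) (inv_sqrt_natCast_le_one hm) (by omega)

/-- If all pairs of `t` collide under `h`, then `h` is constant on the components of the graph
they span, so on its vertex set `V` it is one of `m ^ #components` maps, each taken with
probability `m ^ (-#V)`; and `#V ≥ 2 #components`. -/
theorem sum_mul_prod_collide_le [Fintype α] [DecidableEq α] [Fintype κ] {m : ℕ} (hm : 0 < m)
    (ν : (α → Fin m) → ℝ) (hν₀ : ∀ h, 0 ≤ ν h) {t : κ → α × α} (ht : ∀ s, (t s).1 ≠ (t s).2)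
    (hν : ∀ j : α → Fin m,
      ∑ h, ν h * (if ∀ i ∈ univ.image (endpoint t), h i = j i then 1 else 0) =
        (1 / (m : ℝ)) ^ #(univ.image (endpoint t))) :
    ∑ h, ν h * ∏ s, (if h (t s).1 = h (t s).2 then (1 : ℝ) else 0) ≤
      (√m)⁻¹ ^ #(univ.image (endpoint t)) := by
  classical
  set V := univ.image (endpoint t)
  set K := V.image (Quot.mk (EdgeRel t))
  let extend : (K → Fin m) → α → Fin m := fun c i =>
    if hi : Quot.mk _ i ∈ K then c ⟨_, hi⟩ else ⟨0, hm⟩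
  have hfactor : ∀ h : α → Fin m, (∀ s, h (t s).1 = h (t s).2) →
      ∃ j ∈ univ.image extend, ∀ i ∈ V, h i = j i := by
    intro h hh
    let hK : Quot (EdgeRel t) → Fin m := Quot.lift h fun a b ⟨s, hs⟩ => by
      simpa [hs] using hh s
    refine ⟨extend fun k => hK k, mem_image_of_mem _ (mem_univ _), fun i hi => ?_⟩
    have hiK : Quot.mk (EdgeRel t) i ∈ K := mem_image_of_mem _ hi
    simp only [extend, dif_pos hiK]
    rfl
  simp only [prod_boole, mem_univ, true_implies]
  calc ∑ h, ν h * (if ∀ s, h (t s).1 = h (t s).2 then 1 else 0)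
      ≤ #(univ.image extend) * (1 / (m : ℝ)) ^ #V :=
        sum_mul_indicator_le_card_mul ν hν₀ V hν _ _ hfactor
    _ ≤ (m : ℝ) ^ #K * (1 / (m : ℝ)) ^ #V := by
        gcongr
        calc (#(univ.image extend) : ℝ) ≤ #(univ : Finset (K → Fin m)) := by
              exact_mod_cast card_image_le
          _ = (m : ℝ) ^ #K := by simp
    _ ≤ (√m)⁻¹ ^ #V := natCast_pow_mul_inv_pow_le hm (two_mul_card_components_le ht)

end Hashing

section Signs

variable {ι α : Type*} [Fintype ι] [DecidableEq α]

lemma prod_pm_comp_eq_prod_odd (f : ι → α) (x : α → Bool) :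
    ∏ u, pm (x (f u)) = ∏ a ∈ univ.image f with ¬Even (fiberCard f a), pm (x a) := by
  rw [prod_comp_eq_prod_image_pow f fun a => pm (x a), prod_filter]
  simp only [pm_pow, ite_not]

theorem sum_mul_prod_pm_comp [Fintype α] (μ : (α → Bool) → ℝ) (hμ₁ : ∑ x, μ x = 1) {k : ℕ}
    (hμ : ∀ S : Finset α, S.Nonempty → #S ≤ k → ∑ x, μ x * ∏ i ∈ S, pm (x i) = 0)
    (f : ι → α) (hf : Fintype.card ι ≤ k) :
    ∑ x, μ x * ∏ u, pm (x (f u)) = if ∀ a, Even (fiberCard f a) then 1 else 0 := by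
  simp only [prod_pm_comp_eq_prod_odd]
  split_ifs with heven
  · simp [heven, hμ₁]
  · obtain ⟨a, ha⟩ := not_forall.1 heven
    refine hμ _ ⟨a, mem_filter.2 ⟨fiberCard_ne_zero_iff.1 ?_, ha⟩⟩ ?_
    · exact fun h => ha (by simp [h])
    · exact (card_filter_le _ _).trans (card_image_le.trans (hf.trans' (by simp)))

end Signs

section EvenFibers

variable {ι α : Type*} [Fintype ι] [Fintype α] [DecidableEq α]

/-- The weight `r ^ #(range f) * ∏ u, w (f u)` of a map all of whose fibres have even size
(and `0` for the other maps). -/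
noncomputable def evenFiberWeight (r : ℝ) (w : α → ℝ) (f : ι → α) : ℝ :=
  if ∀ a, Even (fiberCard f a) then ∏ a ∈ univ.image f, r * w a ^ fiberCard f a else 0

lemma evenFiberWeight_nonneg {r : ℝ} (hr₀ : 0 ≤ r) {w : α → ℝ} (hw : ∀ a, 0 ≤ w a)
    (f : ι → α) : 0 ≤ evenFiberWeight r w f := by
  unfold evenFiberWeight
  split_ifs
  exacts [prod_nonneg fun a _ => mul_nonneg hr₀ (pow_nonneg (hw a) _), le_rfl]

theorem sum_evenFiberWeight_le [DecidableEq ι] [Nonempty ι] {w : α → ℝ}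
    (hw : ∀ a, 0 ≤ w a) {r : ℝ} (hr₀ : 0 ≤ r) (hr₁ : r ≤ 1) {p : ℕ}
    (hι : Fintype.card ι = 2 * p) :
    ∑ f : ι → α, evenFiberWeight r w f ≤
      (2 * p : ℝ) ^ (2 * p) * ((r * ∑ a, w a ^ 2) ^ p + √(∑ a, w a ^ 4) ^ p) := by
  have := sum_prod_image_le_of_forall_le (fun a d => r * w a ^ d)
    (fun a d => mul_nonneg hr₀ (pow_nonneg (hw a) d))
    (univ.filter fun f : ι → α => ∀ a, Even (fiberCard f a)) (by positivity) fun f hf =>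
      prod_sum_mul_pow_le w hr₀ hr₁
        (fun a ha => ⟨(mem_filter.1 hf).2 a, fiberCard_ne_zero_iff.2 ha⟩)
        ((sum_fiberCard_image f).trans hι)
  rwa [hι, Nat.cast_mul, Nat.cast_two, sum_filter] at this

end EvenFibers

section Expansion

variable {α β : Type*} [Fintype α] [DecidableEq α] [DecidableEq β]

/-- The off-diagonal part of `‖v D(x) A(h)ᵀ‖₂²`. -/
noncomputable def collisionSum (v : α → ℝ) (h : α → β) (x : α → Bool) : ℝ :=
  ∑ e ∈ univ.offDiag, v e.1 * pm (x e.1) * (v e.2 * pm (x e.2)) *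
    (if h e.1 = h e.2 then 1 else 0)

lemma sum_sq_sub_sum_bucket_sq [Fintype β] (v : α → ℝ) (h : α → β) (x : α → Bool) :
    (∑ i, v i ^ 2) - ∑ j, (∑ i with h i = j, v i * pm (x i)) ^ 2 = -collisionSum v h x := by
  set y : α → ℝ := fun i => v i * pm (x i)
  have hbucket : ∑ j, (∑ i with h i = j, y i) ^ 2 =
      ∑ e ∈ univ ×ˢ univ, y e.1 * y e.2 * (if h e.1 = h e.2 then 1 else 0) := by
    simp_rw [sq, sum_filter, sum_mul_sum, sum_product]
    rw [sum_comm]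
    refine sum_congr rfl fun i _ => ?_
    rw [sum_comm]
    refine sum_congr rfl fun i' _ => ?_
    simp [ite_mul, mul_ite, eq_comm]
  have hdiag : ∑ e ∈ (univ : Finset α).diag, y e.1 * y e.2 * (if h e.1 = h e.2 then 1 else 0)
      = ∑ i, v i ^ 2 := by
    rw [sum_diag]
    refine sum_congr rfl fun i _ => ?_
    simp only [y, if_true, mul_one]
    linear_combination v i ^ 2 * pm_mul_self (x i)
  rw [hbucket, ← diag_union_offDiag, sum_union (disjoint_diag_offDiag _), hdiag, collisionSum]
  ring

theorem sum_mul_collisionSum_pow [Fintype β] (ν : (α → β) → ℝ) (μ : (α → Bool) → ℝ)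
    (v : α → ℝ) (p : ℕ) :
    ∑ h, ∑ x, ν h * μ x * collisionSum v h x ^ p =
      ∑ t ∈ Fintype.piFinset fun _ : Fin p => (univ : Finset α).offDiag,
        (∏ u, v (endpoint t u)) * (∑ x, μ x * ∏ u, pm (x (endpoint t u))) *
          ∑ h, ν h * ∏ s, (if h (t s).1 = h (t s).2 then 1 else 0) := by
  have hpow : ∀ (h : α → β) (x : α → Bool), collisionSum v h x ^ p =
      ∑ t ∈ Fintype.piFinset fun _ : Fin p => (univ : Finset α).offDiag,
        (∏ u, v (endpoint t u)) * (∏ u, pm (x (endpoint t u))) *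
          ∏ s, (if h (t s).1 = h (t s).2 then 1 else 0) := by
    intro h x
    rw [collisionSum, ← Fin.prod_const, prod_univ_sum]
    refine sum_congr rfl fun t _ => ?_
    rw [prod_endpoint t v, prod_endpoint t fun a => pm (x a), ← prod_mul_distrib,
      ← prod_mul_distrib]
    exact prod_congr rfl fun s _ => by ring
  simp_rw [hpow, mul_sum, sum_mul]
  refine (sum_congr rfl fun h _ => sum_comm).trans (sum_comm.trans ?_)
  exact sum_congr rfl fun t _ => sum_congr rfl fun h _ => sum_congr rfl fun x _ => by ring

end Expansion

theorem expansion_term_le {α : Type*} [Fintype α] [DecidableEq α] {m p k : ℕ} (hm : 0 < m)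
    (hk : 2 * p ≤ k) (ν : (α → Fin m) → ℝ) (hν₀ : ∀ h, 0 ≤ ν h)
    (hν : ∀ T : Finset α, #T ≤ k → ∀ j : α → Fin m,
      ∑ h, ν h * (if ∀ i ∈ T, h i = j i then (1 : ℝ) else 0) = (1 / (m : ℝ)) ^ #T)
    (μ : (α → Bool) → ℝ) (hμ₁ : ∑ x, μ x = 1)
    (hμ : ∀ S : Finset α, S.Nonempty → #S ≤ k → ∑ x, μ x * ∏ i ∈ S, pm (x i) = 0)
    (v : α → ℝ) {t : Fin p → α × α} (ht : ∀ s, (t s).1 ≠ (t s).2) :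
    (∏ u, v (endpoint t u)) * (∑ x, μ x * ∏ u, pm (x (endpoint t u))) *
        ∑ h, ν h * ∏ s, (if h (t s).1 = h (t s).2 then 1 else 0) ≤
      evenFiberWeight (√m)⁻¹ (fun a => |v a|) (endpoint t) := by
  have hslots : Fintype.card (Fin p × Bool) ≤ k := by simpa [mul_comm] using hk
  rw [sum_mul_prod_pm_comp μ hμ₁ hμ (endpoint t) hslots, evenFiberWeight]
  split_ifs
  · set H := ∑ h, ν h * ∏ s, (if h (t s).1 = h (t s).2 then (1 : ℝ) else 0)
    have hH₀ : 0 ≤ H := sum_nonneg fun h _ =>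
      mul_nonneg (hν₀ h) (prod_nonneg fun s _ => by split_ifs <;> norm_num)
    have hH : H ≤ (√m)⁻¹ ^ #(univ.image (endpoint t)) :=
      sum_mul_prod_collide_le hm ν hν₀ ht (hν _ (card_image_le.trans hslots))
    calc (∏ u, v (endpoint t u)) * 1 * H ≤ |∏ u, v (endpoint t u)| * H := by
          rw [mul_one]
          exact mul_le_mul_of_nonneg_right (le_abs_self _) hH₀
      _ ≤ |∏ u, v (endpoint t u)| * (√m)⁻¹ ^ #(univ.image (endpoint t)) :=
          mul_le_mul_of_nonneg_left hH (abs_nonneg _)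
      _ = _ := by
          rw [abs_prod, prod_comp_eq_prod_image_pow (endpoint t) fun a => |v a|,
            prod_mul_distrib, prod_const, mul_comm]
  · simp

theorem stmt8 : ∃ C : ℝ, 0 < C ∧ ∀ (n m : ℕ), 0 < m → ∀ (p : ℕ), 2 ≤ p → Even p →
    ∀ (ν : (Fin n → Fin m) → ℝ), (∀ h, 0 ≤ ν h) → (∑ h, ν h = 1) →
    -- ν is a 4p-wise independent hash family
    (∀ (T : Finset (Fin n)), T.card ≤ 4 * p → ∀ j : Fin n → Fin m,
      (∑ h, ν h * (if ∀ i ∈ T, h i = j i then (1:ℝ) else 0)) = (1 / (m:ℝ)) ^ T.card) →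
    ∀ (μ : (Fin n → Bool) → ℝ), (∀ x, 0 ≤ μ x) → (∑ x, μ x = 1) →
    -- μ is a 4p-wise independent distribution over {±1}ⁿ
    (∀ S : Finset (Fin n), S.Nonempty → S.card ≤ 4 * p →
      (∑ x, μ x * ∏ i ∈ S, pm (x i)) = 0) →
    ∀ v : Fin n → ℝ,
    ∑ h, ∑ x, ν h * μ x *
      ((∑ i, v i ^ 2) -
        ∑ j : Fin m, (∑ i ∈ univ.filter fun i => h i = j, v i * pm (x i)) ^ 2) ^ p ≤
      (C * p) ^ (2 * p) * ((∑ i, v i ^ 2) ^ 2 / m) ^ (p / 2)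
      + (C * p) ^ (2 * p) * (∑ i, v i ^ 4) ^ (p / 2) := by
  refine ⟨2, two_pos, fun n m hm p hp hpe ν hν₀ _ hν μ _ hμ₁ hμ v => ?_⟩
  have : NeZero p := ⟨by omega⟩
  set r : ℝ := (√m)⁻¹
  have hr₀ : 0 ≤ r := by positivity
  have hr₁ : r ≤ 1 := inv_sqrt_natCast_le_one hm
  have hp2 : p = 2 * (p / 2) := (Nat.two_mul_div_two_of_even hpe).symm
  simp_rw [sum_sq_sub_sum_bucket_sq, hpe.neg_pow]
  calc _ = _ := sum_mul_collisionSum_pow ν μ v p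
    _ ≤ ∑ t ∈ Fintype.piFinset fun _ : Fin p => (univ : Finset (Fin n)).offDiag,
          evenFiberWeight r (fun i => |v i|) (endpoint t) := sum_le_sum fun t ht =>
        -- `convert` only reconciles the `Decidable` instance `Fin n` uses for `∀ i ∈ T, _`
        expansion_term_le hm (by omega) ν hν₀ (fun T hT j => by convert hν T hT j) μ hμ₁ hμ v
          fun s => (mem_offDiag.1 (Fintype.mem_piFinset.1 ht s)).2.2
    _ ≤ ∑ f, evenFiberWeight r (fun i => |v i|) f := by
        rw [← sum_image endpoint_injective.injOn]
        exact sum_le_sum_of_subset_of_nonneg (subset_univ _) fun f _ _ =>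
          evenFiberWeight_nonneg hr₀ (fun i => abs_nonneg (v i)) f
    _ ≤ (2 * p : ℝ) ^ (2 * p) * ((r * ∑ i, |v i| ^ 2) ^ p + √(∑ i, |v i| ^ 4) ^ p) :=
        sum_evenFiberWeight_le (fun i => abs_nonneg (v i)) hr₀ hr₁ (by simp [mul_comm])
    _ = _ := by
        have hr2 : r ^ 2 = 1 / m := by
          rw [inv_pow, Real.sq_sqrt (Nat.cast_nonneg m), one_div]
        have hN4 : 0 ≤ ∑ i, v i ^ 4 := sum_nonneg fun i _ => by positivity
        have hsq : ∀ x : ℝ, x ^ p = (x ^ 2) ^ (p / 2) := fun x => by rw [← pow_mul, ← hp2]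
        simp only [sq_abs, (by decide : Even 4).pow_abs]
        rw [hsq (r * _), hsq √_, Real.sq_sqrt hN4, mul_pow r, hr2, mul_add, one_div_mul_eq_div]
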